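/- arXiv:2603.12955 — 3 statements merged into one kernel-verified Lean document; each statement's English description precedes it below -/
import Mathlib

section
/- For invertible L ∈ GL_m(ℝ) and R ∈ GL_n(ℝ), the scaling conditions ∑ᵢ (L Aᵢ Rᵀ)(L Aᵢ Rᵀ)ᵀ = (1/m) I_m and ∑ᵢ (L Aᵢ Rᵀ)ᵀ(L Aᵢ Rᵀ) = (1/n) I_n hold if and only if X = LᵀL and Y = RᵀR satisfy X = (1/m)(∑ᵢ Aᵢ Y Aᵢᵀ)⁻¹ and Y = (1/n)(∑ᵢ Aᵢᵀ X Aᵢ)⁻¹. -/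
open Matrix BigOperators

lemma aux {m : ℕ} (c : ℝ) (hc : c ≠ 0) (B S : Matrix (Fin m) (Fin m) ℝ)
    (hB : IsUnit B) (hS : IsUnit S) :
    B * S * Bᵀ = c • 1 ↔ Bᵀ * B = c • S⁻¹ := by
  have hBt : IsUnit Bᵀ := (Matrix.isUnit_transpose B).mpr hB
  have hBd := (Matrix.isUnit_iff_isUnit_det B).mp hB
  have hBtd := (Matrix.isUnit_iff_isUnit_det Bᵀ).mp hBt
  have hSd := (Matrix.isUnit_iff_isUnit_det S).mp hS
  have hc' : Invertible c := invertibleOfNonzero hc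
  have key1 : B * S * Bᵀ = c • 1 ↔ S = c • (B⁻¹ * (Bᵀ)⁻¹) := by
    constructor
    · intro h
      have := congrArg (fun M => B⁻¹ * M * (Bᵀ)⁻¹) h
      simp only [Matrix.mul_assoc] at this
      rw [Matrix.mul_nonsing_inv _ hBtd] at this
      rw [← Matrix.mul_assoc, Matrix.nonsing_inv_mul _ hBd, Matrix.one_mul, Matrix.mul_one] at this
      simpa [Matrix.smul_mul, Matrix.mul_smul] using this
    · intro h
      rw [h]
      simp only [Matrix.smul_mul, Matrix.mul_smul]
      rw [Matrix.mul_assoc, Matrix.mul_assoc, Matrix.nonsing_inv_mul _ hBtd, Matrix.mul_one,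
        Matrix.mul_nonsing_inv _ hBd]
  have key2 : S = c • (B⁻¹ * (Bᵀ)⁻¹) ↔ Bᵀ * B = c • S⁻¹ := by
    constructor
    · intro h
      rw [h, Matrix.inv_smul c (A := B⁻¹ * (Bᵀ)⁻¹)
          ((Matrix.isUnit_iff_isUnit_det _).mp ((Matrix.isUnit_nonsing_inv_iff.mpr hB).mul (Matrix.isUnit_nonsing_inv_iff.mpr hBt))),
        Matrix.mul_inv_rev, Matrix.nonsing_inv_nonsing_inv _ hBtd,
        Matrix.nonsing_inv_nonsing_inv _ hBd, smul_smul, invOf_eq_inv,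
        mul_inv_cancel₀ hc, one_smul]
    · intro h
      have h2 := congrArg Inv.inv h
      simp only [Matrix.mul_inv_rev] at h2
      rw [Matrix.inv_smul c (A := S⁻¹) ((Matrix.isUnit_iff_isUnit_det _).mp (Matrix.isUnit_nonsing_inv_iff.mpr hS)),
        Matrix.nonsing_inv_nonsing_inv _ hSd, invOf_eq_inv] at h2
      have := congrArg (fun M => c • M) h2
      simpa [smul_smul, mul_inv_cancel₀ hc] using this.symm
  exact key1.trans key2

theorem stmt_2 {m n k : ℕ} (hm : 0 < m) (hn : 0 < n)
    (A : Fin k → Matrix (Fin m) (Fin n) ℝ)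
    (L : Matrix (Fin m) (Fin m) ℝ) (R : Matrix (Fin n) (Fin n) ℝ)
    (hL : IsUnit L) (hR : IsUnit R)
    (h1 : (∑ i, A i * (Rᵀ * R) * (A i)ᵀ).PosDef)
    (h2 : (∑ i, (A i)ᵀ * (Lᵀ * L) * A i).PosDef) :
    ((∑ i, (L * A i * Rᵀ) * (L * A i * Rᵀ)ᵀ = ((m : ℝ))⁻¹ • (1 : Matrix (Fin m) (Fin m) ℝ) ∧
      ∑ i, (L * A i * Rᵀ)ᵀ * (L * A i * Rᵀ) = ((n : ℝ))⁻¹ • (1 : Matrix (Fin n) (Fin n) ℝ)) ↔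
     (Lᵀ * L = ((m : ℝ))⁻¹ • (∑ i, A i * (Rᵀ * R) * (A i)ᵀ)⁻¹ ∧
      Rᵀ * R = ((n : ℝ))⁻¹ • (∑ i, (A i)ᵀ * (Lᵀ * L) * A i)⁻¹)) := by
  have hmc : ((m : ℝ))⁻¹ ≠ 0 := inv_ne_zero (Nat.cast_ne_zero.mpr hm.ne')
  have hnc : ((n : ℝ))⁻¹ ≠ 0 := inv_ne_zero (Nat.cast_ne_zero.mpr hn.ne')
  have sumL : ∑ i, (L * A i * Rᵀ) * (L * A i * Rᵀ)ᵀ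
      = L * (∑ i, A i * (Rᵀ * R) * (A i)ᵀ) * Lᵀ := by
    rw [Finset.mul_sum, Finset.sum_mul]
    refine Finset.sum_congr rfl fun i _ => ?_
    simp only [Matrix.transpose_mul, Matrix.transpose_transpose, Matrix.mul_assoc]
  have sumR : ∑ i, (L * A i * Rᵀ)ᵀ * (L * A i * Rᵀ)
      = R * (∑ i, (A i)ᵀ * (Lᵀ * L) * A i) * Rᵀ := by
    rw [Finset.mul_sum, Finset.sum_mul]
    refine Finset.sum_congr rfl fun i _ => ?_
    simp only [Matrix.transpose_mul, Matrix.transpose_transpose, Matrix.mul_assoc]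
  rw [sumL, sumR]
  exact and_congr (aux _ hmc L _ hL h1.isUnit) (aux _ hnc R _ hR h2.isUnit)
end

section
/- Equivalence of OSI-Cholesky-SOR and FPI-Cholesky-SOR: Let (L_t, R_t) be generated by L_{t+1} = (1−ω)L_t + (ω/√m) C_t^{-1} where C_t is the lower-triangular Cholesky factor of ∑ᵢ Aᵢ R_tᵀ R_t Aᵢᵀ, and R_{t+1} = (1−ω)R_t + (ω/√n) D_t^{-1} where D_t is the lower-triangular Cholesky factor of ∑ᵢ Aᵢᵀ L_{t+1}ᵀ L_{t+1} Aᵢ, with L_0 = I_m, R_0 = I_n. Let (L̄_t, R̄_t, Ā_{t,i}) be generated by: C̄_t the lower-triangular Cholesky factor of ∑ᵢ Ā_{t,i} Ā_{t,i}ᵀ, L̄_{t+1} = (1−ω)I_m + (ω/√m) C̄_t^{-1}, D̄_t the lower-triangular Cholesky factor of ∑ᵢ Ā_{t,i}ᵀ L̄_{t+1}ᵀ L̄_{t+1} Ā_{t,i}, R̄_{t+1} = (1−ω)I_n + (ω/√n) D̄_t^{-1}, and Ā_{t+1,i} = L̄_{t+1} Ā_{t,i} R̄_{t+1}ᵀ,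 starting from Ā_{0,i} = Aᵢ. Assuming all Cholesky factorizations exist (i.e., the relevant Gram sums are positive definite) and all L_t have lower-triangular structure with positive diagonals where required, then for all t ≥ 0: L_{t+1} = L̄_{t+1} L_t, R_{t+1} = R̄_{t+1} R_t, and Ā_{t,i} = L_t Aᵢ R_tᵀ for all i. -/
open Matrix BigOperators

/-- A real square matrix is lower triangular. -/
def LowerTriangular {n : ℕ} (M : Matrix (Fin n) (Fin n) ℝ) : Prop :=
  ∀ i j : Fin n, i < j → M i j = 0


lemma ltri_bt {n : ℕ} {M : Matrix (Fin n) (Fin n) ℝ} (h : LowerTriangular M) :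
    M.BlockTriangular OrderDual.toDual := fun i j hij => h i j hij

lemma bt_ltri {n : ℕ} {M : Matrix (Fin n) (Fin n) ℝ} (h : M.BlockTriangular OrderDual.toDual) :
    LowerTriangular M := fun i j hij => h (by exact_mod_cast hij)

lemma ltri_mul {n : ℕ} {X Y : Matrix (Fin n) (Fin n) ℝ} (hX : LowerTriangular X)
    (hY : LowerTriangular Y) : LowerTriangular (X * Y) :=
  bt_ltri ((ltri_bt hX).mul (ltri_bt hY))

lemma ltri_det {n : ℕ} {X : Matrix (Fin n) (Fin n) ℝ} (hX : LowerTriangular X) :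
    X.det = ∏ i, X i i :=
  det_of_lowerTriangular X (ltri_bt hX)

lemma ltri_det_ne_zero {n : ℕ} {X : Matrix (Fin n) (Fin n) ℝ} (hX : LowerTriangular X)
    (hd : ∀ j, 0 < X j j) : X.det ≠ 0 := by
  rw [ltri_det hX]
  exact ne_of_gt (Finset.prod_pos fun i _ => hd i)

lemma ltri_inv {n : ℕ} {X : Matrix (Fin n) (Fin n) ℝ} (hX : LowerTriangular X)
    (hd : ∀ j, 0 < X j j) : LowerTriangular X⁻¹ := by
  have : Invertible X := X.invertibleOfIsUnitDet (isUnit_iff_ne_zero.2 (ltri_det_ne_zero hX hd))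
  exact bt_ltri (blockTriangular_inv_of_blockTriangular (ltri_bt hX))

lemma ltri_diag_mul {n : ℕ} {X Y : Matrix (Fin n) (Fin n) ℝ} (hX : LowerTriangular X)
    (hY : LowerTriangular Y) (i : Fin n) : (X * Y) i i = X i i * Y i i := by
  rw [Matrix.mul_apply]
  apply Finset.sum_eq_single i
  · intro b _ hb
    rcases lt_or_gt_of_ne hb with h | h
    · rw [hY b i h, mul_zero]
    · rw [hX i b h, zero_mul]
  · simp

/-- Uniqueness of the Cholesky factor. -/
lemma chol_unique {n : ℕ} {X Y : Matrix (Fin n) (Fin n) ℝ} (hX : LowerTriangular X)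
    (hXd : ∀ j, 0 < X j j) (hY : LowerTriangular Y) (hYd : ∀ j, 0 < Y j j)
    (h : X * Xᵀ = Y * Yᵀ) : X = Y := by
  have hXdet := ltri_det_ne_zero hX hXd
  have hYdet := ltri_det_ne_zero hY hYd
  set Z := Y⁻¹ * X with hZ
  have hYZ : Y * Z = X := by
    rw [hZ, ← Matrix.mul_assoc, Matrix.mul_nonsing_inv _ (isUnit_iff_ne_zero.2 hYdet),
      Matrix.one_mul]
  have hZlow : LowerTriangular Z := ltri_mul (ltri_inv hY hYd) hX
  have hZup : ∀ i j : Fin n, j < i → Z i j = 0 := by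
    have hZ2 : Z = (X⁻¹ * Y)ᵀ := by
      have hinv : Invertible X := X.invertibleOfIsUnitDet (isUnit_iff_ne_zero.2 hXdet)
      have : Y⁻¹ * (X * Xᵀ) = Yᵀ := by
        rw [h, ← Matrix.mul_assoc, Matrix.nonsing_inv_mul _ (isUnit_iff_ne_zero.2 hYdet),
          Matrix.one_mul]
      have h3 : Z * Xᵀ = Yᵀ := by rw [hZ, Matrix.mul_assoc]; exact this
      have h4 : Z = Yᵀ * (Xᵀ)⁻¹ := by
        rw [← h3, Matrix.mul_assoc, Matrix.mul_nonsing_inv _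
          (by rwa [Matrix.det_transpose, isUnit_iff_ne_zero]), Matrix.mul_one]
      rw [h4]
      simp [Matrix.transpose_mul, Matrix.transpose_nonsing_inv]
    intro i j hij
    rw [hZ2, Matrix.transpose_apply]
    exact ltri_mul (ltri_inv hX hXd) hY j i hij
  have hZZt : Z * Zᵀ = 1 := by
    rw [hZ, Matrix.transpose_mul, Matrix.mul_assoc, ← Matrix.mul_assoc X, h,
      Matrix.transpose_nonsing_inv, ← Matrix.mul_assoc, ← Matrix.mul_assoc,
      Matrix.nonsing_inv_mul _ (isUnit_iff_ne_zero.2 hYdet), Matrix.one_mul,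
      Matrix.mul_nonsing_inv _ (by rwa [Matrix.det_transpose, isUnit_iff_ne_zero])]
  have hZdiagpos : ∀ i, 0 < Z i i := by
    intro i
    have hd : X i i = Y i i * Z i i := by rw [← hYZ, ltri_diag_mul hY hZlow]
    have := hXd i
    nlinarith [hYd i, hXd i]
  have hZdiag1 : ∀ i, Z i i = 1 := by
    intro i
    have h1 : (Z * Zᵀ) i i = 1 := by rw [hZZt]; simp
    rw [Matrix.mul_apply] at h1
    have h2 : ∑ j, Z i j * Zᵀ j i = Z i i * Z i i := by
      apply Finset.sum_eq_single i
      · intro b _ hb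
        rcases lt_or_gt_of_ne hb with hlt | hgt
        · rw [hZup i b hlt, zero_mul]
        · rw [hZlow i b hgt, zero_mul]
      · simp
    rw [h2] at h1
    nlinarith [hZdiagpos i]
  have hZ1 : Z = 1 := by
    ext i j
    rcases lt_trichotomy i j with hlt | heq | hgt
    · rw [hZlow i j hlt, Matrix.one_apply_ne (ne_of_lt hlt)]
    · rw [heq, hZdiag1 j, Matrix.one_apply_eq]
    · rw [hZup i j hgt, Matrix.one_apply_ne (ne_of_gt hgt)]
  rw [← hYZ, hZ1, Matrix.mul_one]

theorem stmt_11 {m n k : ℕ} (A : Fin k → Matrix (Fin m) (Fin n) ℝ) (ω : ℝ) (hω : 0 < ω)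
    (L C : ℕ → Matrix (Fin m) (Fin m) ℝ) (R D : ℕ → Matrix (Fin n) (Fin n) ℝ)
    (Ab : ℕ → Fin k → Matrix (Fin m) (Fin n) ℝ)
    (Lb Cb : ℕ → Matrix (Fin m) (Fin m) ℝ) (Rb Db : ℕ → Matrix (Fin n) (Fin n) ℝ)
    -- FPI-Cholesky-SOR iteration
    (hL0 : L 0 = 1) (hR0 : R 0 = 1)
    (hCpd : ∀ t, (∑ i, A i * ((R t)ᵀ * R t) * (A i)ᵀ).PosDef)
    (hC : ∀ t, LowerTriangular (C t) ∧ (∀ j, 0 < C t j j) ∧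
      C t * (C t)ᵀ = ∑ i, A i * ((R t)ᵀ * R t) * (A i)ᵀ)
    (hLrec : ∀ t, L (t + 1) = (1 - ω) • L t + (ω / Real.sqrt m) • (C t)⁻¹)
    (hDpd : ∀ t, (∑ i, (A i)ᵀ * ((L (t + 1))ᵀ * L (t + 1)) * A i).PosDef)
    (hD : ∀ t, LowerTriangular (D t) ∧ (∀ j, 0 < D t j j) ∧
      D t * (D t)ᵀ = ∑ i, (A i)ᵀ * ((L (t + 1))ᵀ * L (t + 1)) * A i)
    (hRrec : ∀ t, R (t + 1) = (1 - ω) • R t + (ω / Real.sqrt n) • (D t)⁻¹)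
    -- iterates stay lower triangular with positive diagonal
    (hLlt : ∀ t, LowerTriangular (L t) ∧ (∀ j, 0 < L t j j))
    (hRlt : ∀ t, LowerTriangular (R t) ∧ (∀ j, 0 < R t j j))
    -- OSI-Cholesky-SOR iteration
    (hAb0 : ∀ i, Ab 0 i = A i)
    (hCbpd : ∀ t, (∑ i, Ab t i * (Ab t i)ᵀ).PosDef)
    (hCb : ∀ t, LowerTriangular (Cb t) ∧ (∀ j, 0 < Cb t j j) ∧
      Cb t * (Cb t)ᵀ = ∑ i, Ab t i * (Ab t i)ᵀ)
    (hLbrec : ∀ t, Lb (t + 1) = (1 - ω) • (1 : Matrix (Fin m) (Fin m) ℝ)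
      + (ω / Real.sqrt m) • (Cb t)⁻¹)
    (hDbpd : ∀ t, (∑ i, (Ab t i)ᵀ * ((Lb (t + 1))ᵀ * Lb (t + 1)) * Ab t i).PosDef)
    (hDb : ∀ t, LowerTriangular (Db t) ∧ (∀ j, 0 < Db t j j) ∧
      Db t * (Db t)ᵀ = ∑ i, (Ab t i)ᵀ * ((Lb (t + 1))ᵀ * Lb (t + 1)) * Ab t i)
    (hRbrec : ∀ t, Rb (t + 1) = (1 - ω) • (1 : Matrix (Fin n) (Fin n) ℝ)
      + (ω / Real.sqrt n) • (Db t)⁻¹)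
    (hAbrec : ∀ t i, Ab (t + 1) i = Lb (t + 1) * Ab t i * (Rb (t + 1))ᵀ) :
    ∀ t : ℕ, L (t + 1) = Lb (t + 1) * L t ∧ R (t + 1) = Rb (t + 1) * R t ∧
      ∀ i, Ab t i = L t * A i * (R t)ᵀ := by
  have step : ∀ t, (∀ i, Ab t i = L t * A i * (R t)ᵀ) →
      L (t + 1) = Lb (t + 1) * L t ∧ R (t + 1) = Rb (t + 1) * R t := by
    intro t hA
    obtain ⟨hClt, hCd, hCeq⟩ := hC t
    obtain ⟨hCblt, hCbd, hCbeq⟩ := hCb t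
    obtain ⟨hLlt', hLd⟩ := hLlt t
    obtain ⟨hDlt, hDd, hDeq⟩ := hD t
    obtain ⟨hDblt, hDbd, hDbeq⟩ := hDb t
    obtain ⟨hRlt', hRd⟩ := hRlt t
    have hLdet : (L t).det ≠ 0 := ltri_det_ne_zero hLlt' hLd
    have hRdet : (R t).det ≠ 0 := ltri_det_ne_zero hRlt' hRd
    have keyC : ∑ i, Ab t i * (Ab t i)ᵀ
        = L t * (∑ i, A i * ((R t)ᵀ * R t) * (A i)ᵀ) * (L t)ᵀ := by
      rw [Finset.mul_sum, Finset.sum_mul]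
      apply Finset.sum_congr rfl
      intro i _
      rw [hA i]
      simp only [Matrix.transpose_mul, Matrix.transpose_transpose, Matrix.mul_assoc]
    have hsumC : Cb t * (Cb t)ᵀ = (L t * C t) * (L t * C t)ᵀ := by
      rw [hCbeq, keyC, ← hCeq]
      simp only [Matrix.transpose_mul, Matrix.mul_assoc]
    have hCbE : Cb t = L t * C t :=
      chol_unique hCblt hCbd (ltri_mul hLlt' hClt)
        (fun j => by rw [ltri_diag_mul hLlt' hClt]; exact mul_pos (hLd j) (hCd j)) hsumC
    have hL1 : L (t + 1) = Lb (t + 1) * L t := by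
      rw [hLrec t, hLbrec t, Matrix.add_mul, Matrix.smul_mul, Matrix.smul_mul,
        Matrix.one_mul, hCbE, Matrix.mul_inv_rev, Matrix.mul_assoc,
        Matrix.nonsing_inv_mul _ (isUnit_iff_ne_zero.2 hLdet), Matrix.mul_one]
    have hLbA : ∀ i, Lb (t + 1) * Ab t i = L (t + 1) * A i * (R t)ᵀ := by
      intro i
      rw [hA i, ← Matrix.mul_assoc, ← Matrix.mul_assoc, ← hL1]
    have keyD : ∑ i, (Ab t i)ᵀ * ((Lb (t + 1))ᵀ * Lb (t + 1)) * Ab t i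
        = R t * (∑ i, (A i)ᵀ * ((L (t + 1))ᵀ * L (t + 1)) * A i) * (R t)ᵀ := by
      rw [Finset.mul_sum, Finset.sum_mul]
      apply Finset.sum_congr rfl
      intro i _
      have h1 : (Ab t i)ᵀ * ((Lb (t + 1))ᵀ * Lb (t + 1)) * Ab t i
          = (Lb (t + 1) * Ab t i)ᵀ * (Lb (t + 1) * Ab t i) := by
        simp only [Matrix.transpose_mul, Matrix.mul_assoc]
      rw [h1, hLbA i]
      simp only [Matrix.transpose_mul, Matrix.transpose_transpose, Matrix.mul_assoc]
    have hsumD : Db t * (Db t)ᵀ = (R t * D t) * (R t * D t)ᵀ := by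
      rw [hDbeq, keyD, ← hDeq]
      simp only [Matrix.transpose_mul, Matrix.mul_assoc]
    have hDbE : Db t = R t * D t :=
      chol_unique hDblt hDbd (ltri_mul hRlt' hDlt)
        (fun j => by rw [ltri_diag_mul hRlt' hDlt]; exact mul_pos (hRd j) (hDd j)) hsumD
    have hR1 : R (t + 1) = Rb (t + 1) * R t := by
      rw [hRrec t, hRbrec t, Matrix.add_mul, Matrix.smul_mul, Matrix.smul_mul,
        Matrix.one_mul, hDbE, Matrix.mul_inv_rev, Matrix.mul_assoc,
        Matrix.nonsing_inv_mul _ (isUnit_iff_ne_zero.2 hRdet), Matrix.mul_one]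
    exact ⟨hL1, hR1⟩
  have main : ∀ t, ∀ i, Ab t i = L t * A i * (R t)ᵀ := by
    intro t
    induction t with
    | zero => intro i; simp [hAb0, hL0, hR0]
    | succ t ih =>
      obtain ⟨hL1, hR1⟩ := step t ih
      intro i
      rw [hAbrec t i, ih i, hL1, hR1]
      simp only [Matrix.transpose_mul, Matrix.mul_assoc]
  intro t
  exact ⟨(step t (main t)).1, (step t (main t)).2, main t⟩
end

section
/- Equivalence of OSI-Geodesic-SOR and FPI-Geodesic-SOR: Let (X_t, Y_t) be generated by X_{t+1} = X_t #_ω [(1/m)(∑ᵢ Aᵢ Y_t Aᵢᵀ)^{-1}] and Y_{t+1} = Y_t #_ω [(1/n)(∑ᵢ Aᵢᵀ X_{t+1} Aᵢ)^{-1}], with X_0 = I_m, Y_0 = I_n. Let (L̄_t, R̄_t, Ā_{t,i}) be generated by L̄_{t+1} = m^{-ω/2} (∑ᵢ Ā_{t,i} Ā_{t,i}ᵀ)^{-ω/2}, R̄_{t+1} = n^{-ω/2} (∑ᵢ Ā_{t,i}ᵀ L̄_{t+1}ᵀ L̄_{t+1} Ā_{t,i})^{-ω/2}, Ā_{t+1,i}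 = L̄_{t+1} Ā_{t,i} R̄_{t+1}ᵀ, starting from Ā_{0,i} = Aᵢ. Define L_{t+1} = L̄_{t+1} L_t, R_{t+1} = R̄_{t+1} R_t with L_0 = I_m, R_0 = I_n. Then for all t ≥ 0: Ā_{t,i} = L_t Aᵢ R_tᵀ for all i, X_t = L_tᵀ L_t, and Y_t = R_tᵀ R_t. -/
/-!
If `X = Lᵀ L` with `L` invertible, the geodesic is congruence-covariant:
`X #_ω Z = Lᵀ (L⁻ᵀ Z L⁻¹)^ω L`. This follows from the polar decomposition `L = U X^{1/2}`
and the invariance of spectral powers under orthogonal conjugation. For `Z = c⁻¹ B⁻¹` and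
`S = L B Lᵀ` it gives `X #_ω Z = Lᵀ (c^{-ω} S^{-ω}) L = (L̄ L)ᵀ (L̄ L)` with
`L̄ = c^{-ω/2} S^{-ω/2}`, and once `Āᵢ = L Aᵢ Rᵀ` the matrix `S` is exactly the one the
OSI iteration feeds into `L̄`. An induction on `t`, alternating the `X`- and `Y`-updates,
carries the three identities together with the invertibility of `L_t` and `R_t`.
-/

open Matrix BigOperators

/-- Spectral real power of a (Hermitian) real matrix: eigenvalues raised to power `ω`. -/
noncomputable def mrpow {n : ℕ} (M : Matrix (Fin n) (Fin n) ℝ) (ω : ℝ) : Matrix (Fin n) (Fin n) ℝ :=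
  if h : M.IsHermitian then
    (h.eigenvectorUnitary : Matrix (Fin n) (Fin n) ℝ) *
      Matrix.diagonal (fun i => (h.eigenvalues i) ^ ω) *
      star (h.eigenvectorUnitary : Matrix (Fin n) (Fin n) ℝ)
  else M

/-- Geodesic (w.r.t. ω) between positive definite matrices:
`X #_ω X̃ = X^{1/2} (X^{-1/2} X̃ X^{-1/2})^ω X^{1/2}`. -/
noncomputable def geo {n : ℕ} (X Xt : Matrix (Fin n) (Fin n) ℝ) (ω : ℝ) :
    Matrix (Fin n) (Fin n) ℝ :=
  mrpow X (1/2) * mrpow (mrpow X (-(1/2)) * Xt * mrpow X (-(1/2))) ω * mrpow X (1/2)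

namespace Matrix

variable {n : Type*} [Fintype n] [DecidableEq n]

theorem continuousOn_spectrum_real (f : ℝ → ℝ) (M : Matrix n n ℝ) :
    ContinuousOn f (spectrum ℝ M) :=
  M.finite_real_spectrum.continuousOn f

open scoped MatrixOrder in
theorem PosDef.spectrum_real_pos {M : Matrix n n ℝ} (hM : M.PosDef) :
    ∀ x ∈ spectrum ℝ M, 0 < x :=
  fun _ hx => hM.isStrictlyPositive.spectrum_pos hx

theorem posDef_transpose_mul_self {L : Matrix n n ℝ} (hL : IsUnit L) :
    (Lᵀ * L).PosDef := by
  simpa [conjTranspose_eq_transpose_of_trivial] using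
    PosDef.conjTranspose_mul_self L (mulVec_injective_of_isUnit hL)

theorem PosDef.mul_mul_transpose_same {B L : Matrix n n ℝ} (hB : B.PosDef)
    (hL : IsUnit L) : (L * B * Lᵀ).PosDef := by
  simpa [star_eq_conjTranspose, conjTranspose_eq_transpose_of_trivial] using
    (IsUnit.posDef_star_right_conjugate_iff hL).mpr hB

end Matrix

section mrpow

variable {N : ℕ} {M : Matrix (Fin N) (Fin N) ℝ}

theorem mrpow_eq_cfc (hM : M.IsHermitian) (ω : ℝ) :
    mrpow M ω = cfc (fun x : ℝ => x ^ ω) M := by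
  rw [mrpow, dif_pos hM, hM.cfc_eq, IsHermitian.cfc]
  rfl

theorem isHermitian_mrpow (hM : M.IsHermitian) (ω : ℝ) : (mrpow M ω).IsHermitian := by
  rw [mrpow_eq_cfc hM]
  exact cfc_predicate _ M

theorem mrpow_add (hM : M.PosDef) (a b : ℝ) : mrpow M (a + b) = mrpow M a * mrpow M b := by
  simp only [mrpow_eq_cfc hM.1]
  rw [← cfc_mul _ _ M (continuousOn_spectrum_real _ M) (continuousOn_spectrum_real _ M)]
  exact cfc_congr fun x hx => Real.rpow_add (hM.spectrum_real_pos x hx) a b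

theorem mrpow_zero (hM : M.IsHermitian) : mrpow M 0 = 1 := by
  rw [mrpow_eq_cfc hM, cfc_congr fun x _ => Real.rpow_zero x]
  exact cfc_const_one ℝ M

theorem mrpow_one (hM : M.IsHermitian) : mrpow M 1 = M := by
  rw [mrpow_eq_cfc hM, cfc_congr fun x _ => Real.rpow_one x]
  exact cfc_id' ℝ M

theorem transpose_mrpow (hM : M.IsHermitian) (ω : ℝ) : (mrpow M ω)ᵀ = mrpow M ω :=
  (isHermitian_iff_isSymm.mp (isHermitian_mrpow hM ω)).eq

theorem mrpow_mul_mrpow_neg (hM : M.PosDef) (ω : ℝ) : mrpow M ω * mrpow M (-ω) = 1 := by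
  rw [← mrpow_add hM, add_neg_cancel, mrpow_zero hM.1]

theorem isUnit_smul_mrpow (hM : M.PosDef) {c : ℝ} (hc : c ≠ 0)
    (ω : ℝ) : IsUnit (c • mrpow M ω) :=
  IsUnit.of_mul_eq_one (c⁻¹ • mrpow M (-ω)) <| by
    rw [smul_mul_smul_comm, mul_inv_cancel₀ hc, mrpow_mul_mrpow_neg hM, one_smul]

theorem inv_eq_cfc_inv (hM : M.PosDef) : M⁻¹ = cfc (fun x : ℝ => x⁻¹) M := by
  rw [nonsing_inv_eq_ringInverse]
  exact (cfc_ringInverse_id M hM.isUnit hM.1).symm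

theorem mrpow_smul_inv (hM : M.PosDef) {c : ℝ} (hc : 0 < c) (ω : ℝ) :
    mrpow (c • M⁻¹) ω = c ^ ω • mrpow M (-ω) := by
  have hcM : c • M⁻¹ = cfc (fun x => c * x⁻¹) M := by
    rw [inv_eq_cfc_inv hM, cfc_const_mul c _ M (continuousOn_spectrum_real _ M)]
  calc mrpow (c • M⁻¹) ω
      = cfc (fun x : ℝ => x ^ ω) (cfc (fun x : ℝ => c * x⁻¹) M) := by
        rw [hcM]; exact mrpow_eq_cfc (cfc_predicate _ M) ω
    _ = cfc (fun x : ℝ => (c * x⁻¹) ^ ω) M :=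
        (cfc_comp' _ _ M ((M.finite_real_spectrum.image _).continuousOn _)
          (continuousOn_spectrum_real _ M) hM.1).symm
    _ = cfc (fun x : ℝ => c ^ ω * x ^ (-ω)) M := by
        refine cfc_congr fun x hx => ?_
        have hx : 0 ≤ x := (hM.spectrum_real_pos x hx).le
        rw [Real.mul_rpow hc.le (inv_nonneg.mpr hx), Real.inv_rpow hx, Real.rpow_neg hx]
    _ = c ^ ω • mrpow M (-ω) := by
        rw [mrpow_eq_cfc hM.1, cfc_const_mul _ _ M (continuousOn_spectrum_real _ M)]

theorem mrpow_unitary_conj (hM : M.IsHermitian) {U : Matrix (Fin N) (Fin N) ℝ}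
    (hU : U ∈ unitary (Matrix (Fin N) (Fin N) ℝ)) (ω : ℝ) :
    mrpow (U * M * star U) ω = U * mrpow M ω * star U := by
  let φ := Unitary.conjStarAlgAut ℝ _ ⟨U, hU⟩
  have hφ : Continuous φ := (continuous_const.mul continuous_id).mul continuous_const
  have hφM : (φ M).IsHermitian := IsSelfAdjoint.map hM φ
  rw [mrpow_eq_cfc hM]
  exact (mrpow_eq_cfc hφM ω).trans
    (StarAlgHomClass.map_cfc φ _ M (continuousOn_spectrum_real _ M) hφ hM hφM).symm

end mrpow

section geo

variable {N : ℕ}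

theorem geo_transpose_mul_self {L Z : Matrix (Fin N) (Fin N) ℝ} (hL : IsUnit L)
    (hZ : Z.IsHermitian) (ω : ℝ) :
    geo (Lᵀ * L) Z ω = Lᵀ * mrpow ((Lᵀ)⁻¹ * Z * L⁻¹) ω * L := by
  have hX := posDef_transpose_mul_self hL
  set P := mrpow (Lᵀ * L) (1 / 2)
  set Q := mrpow (Lᵀ * L) (-(1 / 2))
  have hPQ : P * Q = 1 := mrpow_mul_mrpow_neg hX _
  have hQP : Q * P = 1 := mul_eq_one_comm.mp hPQ
  have hPP : P * P = Lᵀ * L := by rw [← mrpow_add hX]; norm_num [mrpow_one hX.1]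
  have hPt : Pᵀ = P := transpose_mrpow hX.1 _
  have hQt : Qᵀ = Q := transpose_mrpow hX.1 _
  -- `L = U P` is the polar decomposition of `L`.
  set U := L * Q
  have hUtU : Uᵀ * U = 1 := by
    calc Uᵀ * U = Q * (Lᵀ * L) * Q := by simp only [U, transpose_mul, hQt, Matrix.mul_assoc]
      _ = (Q * P) * (P * Q) := by simp only [← hPP, Matrix.mul_assoc]
      _ = 1 := by rw [hQP, hPQ, one_mul]
  have hU : U ∈ unitary (Matrix (Fin N) (Fin N) ℝ) := by
    rw [← unitaryGroup, mem_unitaryGroup_iff', star_eq_conjTranspose,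
      conjTranspose_eq_transpose_of_trivial, hUtU]
  have hLinv : L⁻¹ = Q * Uᵀ :=
    inv_eq_right_inv (by rw [← Matrix.mul_assoc, mul_eq_one_comm.mp hUtU])
  have hUP : U * P = L := by rw [Matrix.mul_assoc, hQP, mul_one]
  have hQZQ : (Q * Z * Q).IsHermitian := by
    simpa [hQt] using isHermitian_conjTranspose_mul_mul Q hZ
  have harg : (Lᵀ)⁻¹ * Z * L⁻¹ = U * (Q * Z * Q) * star U := by
    rw [← transpose_nonsing_inv, hLinv, star_eq_conjTranspose,
      conjTranspose_eq_transpose_of_trivial]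
    simp only [transpose_mul, transpose_transpose, hQt, Matrix.mul_assoc]
  rw [show geo (Lᵀ * L) Z ω = P * mrpow (Q * Z * Q) ω * P from rfl, harg,
    mrpow_unitary_conj hQZQ hU, star_eq_conjTranspose, conjTranspose_eq_transpose_of_trivial]
  conv_rhs => rw [← hUP, transpose_mul, hPt]
  simp only [Matrix.mul_assoc]
  rw [← Matrix.mul_assoc Uᵀ U, hUtU, one_mul, ← Matrix.mul_assoc Uᵀ U, hUtU, one_mul]

theorem geo_transpose_mul_self_inv_smul_inv {L B : Matrix (Fin N) (Fin N) ℝ} (hL : IsUnit L)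
    (hB : B.PosDef) {c : ℝ} (hc : 0 < c) (ω : ℝ) :
    geo (Lᵀ * L) (c⁻¹ • B⁻¹) ω =
      (c ^ (-ω / 2) • mrpow (L * B * Lᵀ) (-ω / 2) * L)ᵀ *
        (c ^ (-ω / 2) • mrpow (L * B * Lᵀ) (-ω / 2) * L) := by
  set S := L * B * Lᵀ
  have hS : S.PosDef := hB.mul_mul_transpose_same hL
  have hZ : (c⁻¹ • B⁻¹).IsHermitian := hB.inv.1.smul (IsSelfAdjoint.all _)
  have harg : (Lᵀ)⁻¹ * (c⁻¹ • B⁻¹) * L⁻¹ = c⁻¹ • S⁻¹ := by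
    simp only [S, Matrix.mul_inv_rev, Matrix.mul_smul, Matrix.smul_mul, Matrix.mul_assoc]
  have hsq : (c ^ (-ω / 2) • mrpow S (-ω / 2))ᵀ * (c ^ (-ω / 2) • mrpow S (-ω / 2)) =
      c⁻¹ ^ ω • mrpow S (-ω) := by
    rw [transpose_smul, transpose_mrpow hS.1, smul_mul_smul_comm,
      ← mrpow_add hS, ← Real.rpow_add hc, Real.inv_rpow hc.le, ← Real.rpow_neg hc.le]
    ring_nf
  rw [geo_transpose_mul_self hL hZ, harg, mrpow_smul_inv hS (inv_pos.mpr hc), transpose_mul,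
    ← hsq]
  simp only [Matrix.mul_assoc]

theorem geo_transpose_mul_self_natCast_inv_smul_inv {L B L' : Matrix (Fin N) (Fin N) ℝ}
    (hL : IsUnit L) (hB : B.PosDef) {ω : ℝ}
    (hL' : L' = (N : ℝ) ^ (-ω / 2) • mrpow (L * B * Lᵀ) (-ω / 2) * L) :
    geo (Lᵀ * L) ((N : ℝ)⁻¹ • B⁻¹) ω = L'ᵀ * L' ∧ IsUnit L' := by
  rcases N.eq_zero_or_pos with rfl | hN
  · exact ⟨Subsingleton.elim _ _, isUnit_of_subsingleton _⟩
  have hc : (0 : ℝ) < N := Nat.cast_pos.mpr hN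
  have hS : (L * B * Lᵀ).PosDef := hB.mul_mul_transpose_same hL
  subst hL'
  exact ⟨geo_transpose_mul_self_inv_smul_inv hL hB hc ω,
    (isUnit_smul_mrpow hS (Real.rpow_pos_of_pos hc _).ne' _).mul hL⟩

end geo

theorem stmt_12_general {m n k : ℕ} (A : Fin k → Matrix (Fin m) (Fin n) ℝ) (ω : ℝ)
    (X L : ℕ → Matrix (Fin m) (Fin m) ℝ) (Y R : ℕ → Matrix (Fin n) (Fin n) ℝ)
    (Ab : ℕ → Fin k → Matrix (Fin m) (Fin n) ℝ)
    (Lb : ℕ → Matrix (Fin m) (Fin m) ℝ) (Rb : ℕ → Matrix (Fin n) (Fin n) ℝ)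
    -- FPI-Geodesic-SOR iteration
    (hX0 : X 0 = 1) (hY0 : Y 0 = 1)
    (hXpd : ∀ t, (∑ i, A i * Y t * (A i)ᵀ).PosDef)
    (hXrec : ∀ t, X (t + 1) = geo (X t) (((m : ℝ))⁻¹ • (∑ i, A i * Y t * (A i)ᵀ)⁻¹) ω)
    (hYpd : ∀ t, (∑ i, (A i)ᵀ * X (t + 1) * A i).PosDef)
    (hYrec : ∀ t, Y (t + 1) = geo (Y t) (((n : ℝ))⁻¹ • (∑ i, (A i)ᵀ * X (t + 1) * A i)⁻¹) ω)
    -- OSI-Geodesic-SOR iteration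
    (hAb0 : ∀ i, Ab 0 i = A i)
    (hLbrec : ∀ t, Lb (t + 1) = (m : ℝ) ^ (-ω / 2) • mrpow (∑ i, Ab t i * (Ab t i)ᵀ) (-ω / 2))
    (hRbrec : ∀ t, Rb (t + 1) =
      (n : ℝ) ^ (-ω / 2) • mrpow (∑ i, (Ab t i)ᵀ * ((Lb (t + 1))ᵀ * Lb (t + 1)) * Ab t i) (-ω / 2))
    (hAbrec : ∀ t i, Ab (t + 1) i = Lb (t + 1) * Ab t i * (Rb (t + 1))ᵀ)
    -- accumulated scalings
    (hL0 : L 0 = 1) (hR0 : R 0 = 1)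
    (hLrec : ∀ t, L (t + 1) = Lb (t + 1) * L t)
    (hRrec : ∀ t, R (t + 1) = Rb (t + 1) * R t) :
    ∀ t : ℕ, (∀ i, Ab t i = L t * A i * (R t)ᵀ) ∧
      X t = (L t)ᵀ * L t ∧ Y t = (R t)ᵀ * R t := by
  suffices H : ∀ t, ((∀ i, Ab t i = L t * A i * (R t)ᵀ) ∧
      X t = (L t)ᵀ * L t ∧ Y t = (R t)ᵀ * R t) ∧ IsUnit (L t) ∧ IsUnit (R t) from
    fun t => (H t).1
  intro t
  induction t with
  | zero => simp [hAb0, hX0, hY0, hL0, hR0]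
  | succ t ih =>
    obtain ⟨⟨hAb, hX, hY⟩, hL, hR⟩ := ih
    have hSL : ∑ i, Ab t i * (Ab t i)ᵀ = L t * (∑ i, A i * Y t * (A i)ᵀ) * (L t)ᵀ := by
      simp only [hAb, hY, Finset.mul_sum, Finset.sum_mul, transpose_mul, transpose_transpose,
        Matrix.mul_assoc]
    obtain ⟨hX', hL'⟩ := geo_transpose_mul_self_natCast_inv_smul_inv (L' := L (t + 1))
      (ω := ω) hL (hXpd t) (by rw [hLrec, hLbrec, hSL])
    rw [← hX, ← hXrec] at hX'
    have hSR : ∑ i, (Ab t i)ᵀ * ((Lb (t + 1))ᵀ * Lb (t + 1)) * Ab t i =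
        R t * (∑ i, (A i)ᵀ * X (t + 1) * A i) * (R t)ᵀ := by
      simp only [hAb, hX', hLrec, Finset.mul_sum, Finset.sum_mul, transpose_mul,
        transpose_transpose, Matrix.mul_assoc]
    obtain ⟨hY', hR'⟩ := geo_transpose_mul_self_natCast_inv_smul_inv (L' := R (t + 1))
      (ω := ω) hR (hYpd t) (by rw [hRrec, hRbrec, hSR])
    rw [← hY, ← hYrec] at hY'
    refine ⟨⟨fun i => ?_, hX', hY'⟩, hL', hR'⟩
    rw [hAbrec, hAb, hLrec, hRrec, transpose_mul]
    simp only [Matrix.mul_assoc]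

theorem stmt_12 {m n k : ℕ} (A : Fin k → Matrix (Fin m) (Fin n) ℝ) (ω : ℝ) (hω : 0 < ω)
    (X L : ℕ → Matrix (Fin m) (Fin m) ℝ) (Y R : ℕ → Matrix (Fin n) (Fin n) ℝ)
    (Ab : ℕ → Fin k → Matrix (Fin m) (Fin n) ℝ)
    (Lb : ℕ → Matrix (Fin m) (Fin m) ℝ) (Rb : ℕ → Matrix (Fin n) (Fin n) ℝ)
    -- FPI-Geodesic-SOR iteration
    (hX0 : X 0 = 1) (hY0 : Y 0 = 1)
    (hXpd : ∀ t, (∑ i, A i * Y t * (A i)ᵀ).PosDef)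
    (hXrec : ∀ t, X (t + 1) = geo (X t) (((m : ℝ))⁻¹ • (∑ i, A i * Y t * (A i)ᵀ)⁻¹) ω)
    (hYpd : ∀ t, (∑ i, (A i)ᵀ * X (t + 1) * A i).PosDef)
    (hYrec : ∀ t, Y (t + 1) = geo (Y t) (((n : ℝ))⁻¹ • (∑ i, (A i)ᵀ * X (t + 1) * A i)⁻¹) ω)
    -- OSI-Geodesic-SOR iteration
    (hAb0 : ∀ i, Ab 0 i = A i)
    (hLbpd : ∀ t, (∑ i, Ab t i * (Ab t i)ᵀ).PosDef)
    (hLbrec : ∀ t, Lb (t + 1) = (m : ℝ) ^ (-ω / 2) • mrpow (∑ i, Ab t i * (Ab t i)ᵀ) (-ω / 2))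
    (hRbpd : ∀ t, (∑ i, (Ab t i)ᵀ * ((Lb (t + 1))ᵀ * Lb (t + 1)) * Ab t i).PosDef)
    (hRbrec : ∀ t, Rb (t + 1) =
      (n : ℝ) ^ (-ω / 2) • mrpow (∑ i, (Ab t i)ᵀ * ((Lb (t + 1))ᵀ * Lb (t + 1)) * Ab t i) (-ω / 2))
    (hAbrec : ∀ t i, Ab (t + 1) i = Lb (t + 1) * Ab t i * (Rb (t + 1))ᵀ)
    -- accumulated scalings
    (hL0 : L 0 = 1) (hR0 : R 0 = 1)
    (hLrec : ∀ t, L (t + 1) = Lb (t + 1) * L t)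
    (hRrec : ∀ t, R (t + 1) = Rb (t + 1) * R t) :
    ∀ t : ℕ, (∀ i, Ab t i = L t * A i * (R t)ᵀ) ∧
      X t = (L t)ᵀ * L t ∧ Y t = (R t)ᵀ * R t :=
  stmt_12_general A ω X L Y R Ab Lb Rb hX0 hY0 hXpd hXrec hYpd hYrec hAb0 hLbrec hRbrec hAbrec hL0
    hR0 hLrec hRrec
end
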